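/- Let x ∈ {0,1}^n with n/100 < |x|_0 ≤ n/50 (and n/100 ∈ ℕ), and let X_1, …, X_m be i.i.d. copies of the segmented-noise fitness of x (each X_k equals n − |x|_0 with probability 1/2 + 1/n and equals 3n + |x|_0 with probability 1/2 − 1/n), where m = 2n^3 + 1. Then the median of X_1, …, X_m equals n − |x|_0 with probability at least 1 − 2·exp(−8n⁴/m). -/

import Mathlib

/-!
The number of samples equal to the larger value `3n + i` is a sum of `m = 2n³ + 1` independent
indicators of mean `1/2 - 1/n`, hence has mean `n³ + 1/2 - 2n² - 1/n`. By Hoeffding's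
inequality it exceeds its mean by at least `2n²` with probability at most
`exp(-2(2n²)²/m) = exp(-8n⁴/m)`. Otherwise at most `n³` samples take the larger value, so the
smaller value `n - i` fills the middle position of the sorted sample.
-/

open MeasureTheory ENNReal

/-- The median of `m` real values: the `((m+1)/2)`-th smallest value for odd `m`, and the
average of the `(m/2)`-th and `(m/2+1)`-th smallest values for even `m`. -/
noncomputable def medianOf {m : ℕ} (v : Fin m → ℝ) : ℝ :=
  let s := List.insertionSort (· ≤ ·) (List.ofFn v)
  if m % 2 = 1 then s.getD ((m - 1) / 2) 0
  else (s.getD (m / 2 - 1) 0 + s.getD (m / 2) 0) / 2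

/-- Segmented noise in the middle segment: for `n/100 < i ≤ n/50` the noisy fitness of a
solution with `i` zero-bits equals `n - i` with probability `1/2 + 1/n` and `3n + i` with
probability `1/2 - 1/n`. -/
noncomputable def segMidNoiseDist (n i : ℕ) : Measure ℝ :=
  ENNReal.ofReal (1 / 2 + 1 / n) • Measure.dirac ((n : ℝ) - i)
    + ENNReal.ofReal (1 / 2 - 1 / n) • Measure.dirac (3 * (n : ℝ) + i)

open ProbabilityTheory Finset

theorem List.insertionSort_eq_replicate_append_replicate {α : Type*} [LinearOrder α]
    {a b : α} (hab : a < b) {l : List α} (hl : l ⊆ [a, b]) :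
    l.insertionSort (· ≤ ·) = replicate (l.count a) a ++ replicate (l.count b) b := by
  have hperm :
      (l.insertionSort (· ≤ ·)).Perm (replicate (l.count a) a ++ replicate (l.count b) b) :=
    (perm_insertionSort _ l).trans ((perm_replicate_append_replicate hab.ne).2 ⟨rfl, rfl, hl⟩)
  refine hperm.eq_of_pairwise' (pairwise_insertionSort _ l) ?_
  simp only [pairwise_append, pairwise_replicate, le_refl, or_true, true_and]
  intro x hx y hy
  rw [eq_of_mem_replicate hx, eq_of_mem_replicate hy]
  exact hab.le

theorem List.count_ofFn {α : Type*} [DecidableEq α] {m : ℕ} (v : Fin m → α) (a : α) :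
    (ofFn v).count a = #{k | v k = a} := by
  rw [← Multiset.coe_count, ← Fin.univ_val_map, Multiset.count_map]
  simp [Finset.card, Finset.filter_val, eq_comm]

theorem medianOf_eq_of_card_le {N : ℕ} {u w : ℝ} (huw : u < w) {v : Fin (2 * N + 1) → ℝ}
    (hv : ∀ k, v k = u ∨ v k = w) (hcard : #{k | v k = w} ≤ N) : medianOf v = u := by
  have hsub : List.ofFn v ⊆ [u, w] := by
    intro x hx
    obtain ⟨k, rfl⟩ := List.mem_ofFn.1 hx
    simpa using hv k
  have hlen := ((List.perm_replicate_append_replicate huw.ne).2 ⟨rfl, rfl, hsub⟩).length_eq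
  simp only [List.length_ofFn, List.length_append, List.length_replicate,
    List.count_ofFn] at hlen
  simp only [medianOf]
  rw [if_pos (by omega), List.insertionSort_eq_replicate_append_replicate huw hsub,
    List.count_ofFn, List.getD_append _ _ _ _ (by simp only [List.length_replicate]; omega),
    List.getD_eq_getElem?_getD, List.getElem?_replicate, if_pos (by omega)]
  rfl

theorem measureReal_pi_sum_indicator_sub_ge_le {ι α : Type*} [Fintype ι] [MeasurableSpace α]
    (μ : Measure α) [IsProbabilityMeasure μ] {s : Set α} (hs : MeasurableSet s)
    {ε : ℝ} (hε : 0 ≤ ε) :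
    (Measure.pi fun _ : ι => μ).real {v | ε ≤ ∑ k, (s.indicator 1 (v k) - μ.real s)} ≤
      Real.exp (-2 * ε ^ 2 / Fintype.card ι) := by
  set X : α → ℝ := fun x => s.indicator 1 x - μ.real s
  have hX : Measurable X := (measurable_one.indicator hs).sub_const _
  have hsub : HasSubgaussianMGF X (1 / 4) μ := by
    have := hasSubgaussianMGF_of_mem_Icc (μ := μ) (a := 0) (b := 1)
      (measurable_one.indicator hs).aemeasurable (ae_of_all _ fun x => ?_)
    · convert this using 2
      · rw [integral_indicator_one hs]
      · ext; norm_num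
    · simp only [Set.indicator, Pi.one_apply]; split_ifs <;> simp
  have hsub_apply (k : ι) :
      HasSubgaussianMGF (fun v => X (v k)) (1 / 4) (Measure.pi fun _ => μ) :=
    HasSubgaussianMGF.of_map (X := X) (measurable_pi_apply k).aemeasurable
      (by rwa [(measurePreserving_eval (fun _ : ι => μ) k).map_eq])
  convert HasSubgaussianMGF.measure_sum_ge_le_of_iIndepFun (s := Finset.univ)
    (iIndepFun_pi fun _ => hX.aemeasurable) (fun k _ => hsub_apply k) hε using 2
  push_cast
  simp only [Finset.sum_const, Finset.card_univ, nsmul_eq_mul]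
  ring

theorem ae_pi_forall_apply {ι α : Type*} [Fintype ι] [MeasurableSpace α] {μ : Measure α}
    [SigmaFinite μ] {P : α → Prop} (h : ∀ᵐ x ∂μ, P x) :
    ∀ᵐ v ∂(Measure.pi fun _ : ι => μ), ∀ k, P (v k) :=
  ae_all_iff.2 fun k => (Measure.quasiMeasurePreserving_eval _ k).ae h

theorem ofReal_one_sub_le_measure {Ω : Type*} [MeasurableSpace Ω] {P : Measure Ω}
    [IsProbabilityMeasure P] {A B : Set Ω} {δ : ℝ} (hAB : ∀ᵐ ω ∂P, ω ∉ B → ω ∈ A)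
    (hB : P.real B ≤ δ) : ENNReal.ofReal (1 - δ) ≤ P A := by
  have hδ : 0 ≤ δ := measureReal_nonneg.trans hB
  calc ENNReal.ofReal (1 - δ) = 1 - ENNReal.ofReal δ := by
        rw [ENNReal.ofReal_sub _ hδ, ENNReal.ofReal_one]
    _ ≤ 1 - P B := by
        gcongr
        rw [← ofReal_measureReal]
        exact ENNReal.ofReal_le_ofReal hB
    _ ≤ P Bᶜ := by
        rw [tsub_le_iff_left, ← measure_univ (μ := P), ← Set.union_compl_self B]
        exact measure_union_le _ _
    _ ≤ P A := measure_mono_ae hAB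

section TwoPoint

variable {α : Type*} [MeasurableSpace α] {u w : α} {p q : ℝ}

theorem isProbabilityMeasure_smul_dirac_add_smul_dirac (hp : 0 ≤ p) (hq : 0 ≤ q)
    (hpq : p + q = 1) :
    IsProbabilityMeasure
      (ENNReal.ofReal p • Measure.dirac u + ENNReal.ofReal q • Measure.dirac w) := by
  constructor
  simp [← ENNReal.ofReal_add hp hq, hpq]

theorem ae_eq_or_eq_smul_dirac_add_smul_dirac [MeasurableSingletonClass α] :
    ∀ᵐ x ∂(ENNReal.ofReal p • Measure.dirac u + ENNReal.ofReal q • Measure.dirac w),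
      x = u ∨ x = w := by
  rw [ae_add_measure_iff]
  refine ⟨Measure.ae_smul_measure ?_ _, Measure.ae_smul_measure ?_ _⟩ <;> simp [ae_dirac_eq]

theorem measureReal_singleton_smul_dirac_add_smul_dirac [MeasurableSingletonClass α]
    (huw : u ≠ w) (hq : 0 ≤ q) :
    (ENNReal.ofReal p • Measure.dirac u + ENNReal.ofReal q • Measure.dirac w).real {w} = q := by
  simp [measureReal_def, huw, hq]

theorem measureReal_pi_card_ge_le_smul_dirac_add_smul_dirac {ι : Type*} [Fintype ι]
    [MeasurableSingletonClass α] [DecidableEq α] (huw : u ≠ w) (hp : 0 ≤ p) (hq : 0 ≤ q)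
    (hpq : p + q = 1) {ε : ℝ} (hε : 0 ≤ ε) :
    (Measure.pi fun _ : ι =>
        ENNReal.ofReal p • Measure.dirac u + ENNReal.ofReal q • Measure.dirac w).real
        {v | Fintype.card ι * q + ε ≤ #{k | v k = w}} ≤
      Real.exp (-2 * ε ^ 2 / Fintype.card ι) := by
  set μ := ENNReal.ofReal p • Measure.dirac u + ENNReal.ofReal q • Measure.dirac w
  have : IsProbabilityMeasure μ := isProbabilityMeasure_smul_dirac_add_smul_dirac hp hq hpq
  convert measureReal_pi_sum_indicator_sub_ge_le μ (measurableSet_singleton w) hε using 3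
  ext v
  rw [measureReal_singleton_smul_dirac_add_smul_dirac huw hq, Finset.sum_sub_distrib,
    Finset.natCast_card_filter]
  simp [Set.indicator_apply, le_sub_iff_add_le']

end TwoPoint

theorem median_segmented_noise_mid_general (n i : ℕ)
    (hlo : n < 100 * i) (hhi : 50 * i ≤ n) :
    ENNReal.ofReal (1 - 2 * Real.exp (-8 * (n : ℝ) ^ 4 / (2 * (n : ℝ) ^ 3 + 1))) ≤
      (Measure.pi fun _ : Fin (2 * n ^ 3 + 1) => segMidNoiseDist n i)
        {v | medianOf v = (n : ℝ) - i} := by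
  have hn : (2 : ℝ) ≤ n := by exact_mod_cast (show 2 ≤ n by omega)
  have hp : (0 : ℝ) ≤ 1 / 2 + 1 / n := by positivity
  have hq : (0 : ℝ) ≤ 1 / 2 - 1 / n := by
    rw [sub_nonneg]; exact one_div_le_one_div_of_le two_pos hn
  have huw : (n : ℝ) - i < 3 * n + i := by linarith [(i.cast_nonneg : (0 : ℝ) ≤ i)]
  have : IsProbabilityMeasure (segMidNoiseDist n i) :=
    isProbabilityMeasure_smul_dirac_add_smul_dirac hp hq (by ring)
  have hthreshold :
      ((2 * n ^ 3 + 1 : ℕ) : ℝ) * (1 / 2 - 1 / n) + 2 * n ^ 2 = n ^ 3 + 1 / 2 - 1 / n := by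
    field_simp
    push_cast
    ring
  have hHoeffding := measureReal_pi_card_ge_le_smul_dirac_add_smul_dirac
    (ι := Fin (2 * n ^ 3 + 1)) huw.ne hp hq (by ring) (ε := 2 * n ^ 2) (by positivity)
  calc _ ≤ ENNReal.ofReal (1 - Real.exp (-8 * (n : ℝ) ^ 4 / (2 * (n : ℝ) ^ 3 + 1))) :=
        ENNReal.ofReal_le_ofReal (by linarith [Real.exp_pos (-8 * (n : ℝ) ^ 4 / (2 * n ^ 3 + 1))])
    _ ≤ _ := by
      refine ofReal_one_sub_le_measure ?_ (hHoeffding.trans_eq ?_)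
      · filter_upwards [ae_pi_forall_apply ae_eq_or_eq_smul_dirac_add_smul_dirac] with v hv hlt
        refine medianOf_eq_of_card_le huw hv (Nat.lt_succ_iff.1 ?_)
        simp only [not_le, Fintype.card_fin, hthreshold] at hlt
        refine Nat.cast_lt (α := ℝ) |>.1 (hlt.trans_le ?_)
        push_cast
        linarith [one_div_nonneg.2 (by linarith : (0 : ℝ) ≤ n)]
      · push_cast [Fintype.card_fin]
        congr 1
        ring

/-- Let `x ∈ {0,1}ⁿ` with `n/100 < |x|₀ = i ≤ n/50` (and `n/100 ∈ ℕ`), and let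
`X₁, …, X_m` be i.i.d. copies of the segmented-noise fitness of `x`, where `m = 2n³ + 1`.
Then the median of `X₁, …, X_m` equals `n - i` with probability at least
`1 - 2·exp(-8n⁴/m)`. -/
theorem median_segmented_noise_mid (n i : ℕ) (hdvd : 100 ∣ n)
    (hlo : n < 100 * i) (hhi : 50 * i ≤ n) :
    ENNReal.ofReal (1 - 2 * Real.exp (-8 * (n : ℝ) ^ 4 / (2 * (n : ℝ) ^ 3 + 1))) ≤
      (Measure.pi fun _ : Fin (2 * n ^ 3 + 1) => segMidNoiseDist n i)
        {v | medianOf v = (n : ℝ) - i} :=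
  median_segmented_noise_mid_general n i hlo hhi
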